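/- Let Φ*(η₁,η₂) = η₁ log η₁ + η₂ log η₂ − (1 + η₁ + η₂) log(1 + η₁ + η₂) on Ω* = (0,∞)², let g = Hess Φ*, define the Ricci matrix R by R_{ij} = −∂²(log det g)/∂η_i∂η_j, and set A = R·g⁻¹. Then at every point of Ω*, with S = 1 + η₁ + η₂: det A = ( 1 + 2(η₁ + η₁² + η₂ + η₂² + η₁η₂) ) / ( η₁ η₂ S ) and tr A = −3 − 1/η₁ − 1/η₂ + 1/S. -/

import Mathlib

open Real Matrix

/-- Partial derivative of `f : ℝⁿ → ℝ` in the `i`-th coordinate direction. -/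
noncomputable def pd {n : ℕ} (i : Fin n) (f : (Fin n → ℝ) → ℝ) : (Fin n → ℝ) → ℝ :=
  fun x => fderiv ℝ f x (Pi.single i 1)

/-- Hessian matrix of second partial derivatives of `f : ℝⁿ → ℝ`. -/
noncomputable def hessian {n : ℕ} (f : (Fin n → ℝ) → ℝ) (x : Fin n → ℝ) :
    Matrix (Fin n) (Fin n) ℝ :=
  Matrix.of fun i j => pd i (pd j f) x

/-- The Legendre dual of the negative trinomial log-partition function. -/
noncomputable def ΦNegTriStar (η : Fin 2 → ℝ) : ℝ :=
  η 0 * Real.log (η 0) + η 1 * Real.log (η 1) -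
    (1 + η 0 + η 1) * Real.log (1 + η 0 + η 1)

/-- The Ricci matrix `R_{ij} = -∂²(log det Hess Φ*)/∂η_i∂η_j` of `𝕎_NegTri`. -/
noncomputable def ricciNegTri (η : Fin 2 → ℝ) : Matrix (Fin 2) (Fin 2) ℝ :=
  -(hessian (fun y => Real.log ((hessian ΦNegTriStar y).det)) η)

/-!
Both `Φ*` and `log det Hess Φ*` have the form `Σᵢ ψ(ηᵢ) + χ(S)` with `S = 1 + Σᵢ ηᵢ`, whose
Hessian is `diag ψ''(ηᵢ) + χ''(S)` (the constant added to every entry). For `Φ*` this gives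
`g = diag (1/ηᵢ) − 1/S`, hence `det g = 1/(η₀η₁S)` and `log det g = −Σ log ηᵢ − log S`, which is
again of that form, so `R = −diag (1/ηᵢ²) − 1/S²`. With `g⁻¹ = diag η + ηηᵀ`, the determinant and
trace of `R g⁻¹` are then a computation with explicit `2 × 2` matrices.
-/

open Filter Topology

section PartialDerivatives

variable {n : ℕ} {f g : (Fin n → ℝ) → ℝ} {x : Fin n → ℝ}

theorem HasFDerivAt.pd_eq {f' : (Fin n → ℝ) →L[ℝ] ℝ} (h : HasFDerivAt f f' x) (i : Fin n) :
    pd i f x = f' (Pi.single i 1) := by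
  rw [pd, h.fderiv]

theorem Filter.EventuallyEq.pd_eq (h : f =ᶠ[𝓝 x] g) (i : Fin n) : pd i f x = pd i g x := by
  rw [pd, pd, h.fderiv_eq]

theorem Filter.EventuallyEq.pd (h : f =ᶠ[𝓝 x] g) (i : Fin n) : pd i f =ᶠ[𝓝 x] pd i g :=
  (h.fderiv (𝕜 := ℝ)).mono fun y hy => by simp only [_root_.pd, hy]

theorem Filter.EventuallyEq.hessian_eq (h : f =ᶠ[𝓝 x] g) : hessian f x = hessian g x := by
  ext i j
  exact (h.pd j).pd_eq i

end PartialDerivatives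

section SeparablePlusSum

variable {n : ℕ} {ψ ψ' ψ'' χ χ' χ'' : ℝ → ℝ} {c : ℝ} {x : Fin n → ℝ}

theorem hasFDerivAt_const_add_sum :
    HasFDerivAt (fun y : Fin n → ℝ => c + ∑ i, y i)
      (∑ i, ContinuousLinearMap.proj (R := ℝ) (φ := fun _ : Fin n => ℝ) i) x := by
  simpa using (hasFDerivAt_const c x).fun_add
    (HasFDerivAt.fun_sum fun i _ => hasFDerivAt_apply (𝕜 := ℝ) i x)

theorem pd_sum_comp_add_comp (hψ : ∀ i, HasDerivAt ψ (ψ' (x i)) (x i))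
    (hχ : HasDerivAt χ (χ' (c + ∑ i, x i)) (c + ∑ i, x i)) (j : Fin n) :
    pd j (fun y => ∑ i, ψ (y i) + χ (c + ∑ i, y i)) x = ψ' (x j) + χ' (c + ∑ i, x i) := by
  have hsum := HasFDerivAt.fun_sum fun i (_ : i ∈ Finset.univ) =>
    (hψ i).comp_hasFDerivAt x (hasFDerivAt_apply (𝕜 := ℝ) i x)
  refine ((hsum.fun_add (hχ.comp_hasFDerivAt x hasFDerivAt_const_add_sum)).pd_eq j).trans ?_
  simp [Pi.single_apply]

theorem pd_comp_apply_add_comp {j : Fin n} (hψ' : HasDerivAt ψ' (ψ'' (x j)) (x j))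
    (hχ' : HasDerivAt χ' (χ'' (c + ∑ i, x i)) (c + ∑ i, x i)) (i : Fin n) :
    pd i (fun y => ψ' (y j) + χ' (c + ∑ i, y i)) x =
      (if i = j then ψ'' (x j) else 0) + χ'' (c + ∑ i, x i) := by
  refine (((hψ'.comp_hasFDerivAt x (hasFDerivAt_apply (𝕜 := ℝ) j x)).fun_add
    (hχ'.comp_hasFDerivAt x hasFDerivAt_const_add_sum)).pd_eq i).trans ?_
  simp [Pi.single_apply, eq_comm]

theorem hessian_sum_comp_add_comp (hψ : ∀ i, ∀ᶠ t in 𝓝 (x i), HasDerivAt ψ (ψ' t) t)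
    (hψ' : ∀ i, HasDerivAt ψ' (ψ'' (x i)) (x i))
    (hχ : ∀ᶠ t in 𝓝 (c + ∑ i, x i), HasDerivAt χ (χ' t) t)
    (hχ' : HasDerivAt χ' (χ'' (c + ∑ i, x i)) (c + ∑ i, x i)) :
    hessian (fun y => ∑ i, ψ (y i) + χ (c + ∑ i, y i)) x =
      Matrix.of fun i j => (if i = j then ψ'' (x j) else 0) + χ'' (c + ∑ i, x i) := by
  have hψ_near : ∀ᶠ y in 𝓝 x, ∀ i, HasDerivAt ψ (ψ' (y i)) (y i) :=
    eventually_all.2 fun i => ((continuous_apply i).tendsto x).eventually (hψ i)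
  have hχ_near : ∀ᶠ y in 𝓝 x, HasDerivAt χ (χ' (c + ∑ i, y i)) (c + ∑ i, y i) :=
    ((by fun_prop : Continuous fun y : Fin n → ℝ => c + ∑ i, y i).tendsto x).eventually hχ
  ext i j
  have hpd : pd j (fun y => ∑ i, ψ (y i) + χ (c + ∑ i, y i)) =ᶠ[𝓝 x]
      fun y => ψ' (y j) + χ' (c + ∑ i, y i) := by
    filter_upwards [hψ_near, hχ_near] with y hyψ hyχ
    exact pd_sum_comp_add_comp hyψ hyχ j
  rw [hessian, Matrix.of_apply, Matrix.of_apply, hpd.pd_eq, pd_comp_apply_add_comp (hψ' j) hχ']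

end SeparablePlusSum

section NegTri

variable {η : Fin 2 → ℝ}

theorem ΦNegTriStar_eq_sum :
    ΦNegTriStar = fun y => ∑ i, y i * log (y i) + -((1 + ∑ i, y i) * log (1 + ∑ i, y i)) := by
  funext y
  simp [ΦNegTriStar, Fin.sum_univ_two, add_assoc, sub_eq_add_neg]

theorem hessian_ΦNegTriStar (h0 : η 0 ≠ 0) (h1 : η 1 ≠ 0) (hS : 1 + η 0 + η 1 ≠ 0) :
    hessian ΦNegTriStar η =
      !![(η 0)⁻¹ - (1 + η 0 + η 1)⁻¹, -(1 + η 0 + η 1)⁻¹;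
         -(1 + η 0 + η 1)⁻¹, (η 1)⁻¹ - (1 + η 0 + η 1)⁻¹] := by
  have hη : ∀ i, η i ≠ 0 := Fin.forall_fin_two.2 ⟨h0, h1⟩
  have hS' : 1 + ∑ i, η i ≠ 0 := by rwa [Fin.sum_univ_two, ← add_assoc]
  rw [ΦNegTriStar_eq_sum]
  refine (hessian_sum_comp_add_comp (ψ'' := fun t => t⁻¹) (χ'' := fun t => -t⁻¹)
    (fun i => (eventually_ne_nhds (hη i)).mono fun t ht => hasDerivAt_mul_log ht)
    (fun i => (hasDerivAt_log (hη i)).add_const 1)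
    ((eventually_ne_nhds hS').mono fun t ht => (hasDerivAt_mul_log ht).neg)
    ((hasDerivAt_log hS').add_const 1).neg).trans ?_
  ext i j
  fin_cases i <;> fin_cases j <;> simp [Fin.sum_univ_two, add_assoc, sub_eq_add_neg]

theorem det_hessian_ΦNegTriStar (h0 : η 0 ≠ 0) (h1 : η 1 ≠ 0) (hS : 1 + η 0 + η 1 ≠ 0) :
    (hessian ΦNegTriStar η).det = (η 0 * η 1 * (1 + η 0 + η 1))⁻¹ := by
  rw [hessian_ΦNegTriStar h0 h1 hS, det_fin_two_of]
  field_simp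
  ring

theorem log_det_hessian_ΦNegTriStar_eventuallyEq (h0 : η 0 ≠ 0) (h1 : η 1 ≠ 0)
    (hS : 1 + η 0 + η 1 ≠ 0) :
    (fun y => log (hessian ΦNegTriStar y).det) =ᶠ[𝓝 η]
      fun y => ∑ i, -log (y i) + -log (1 + ∑ i, y i) := by
  filter_upwards [(continuous_apply 0).continuousAt.eventually_ne h0,
    (continuous_apply 1).continuousAt.eventually_ne h1,
    (by fun_prop : Continuous fun y : Fin 2 → ℝ => 1 + y 0 + y 1).continuousAt.eventually_ne hS]
    with y hy0 hy1 hyS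
  rw [det_hessian_ΦNegTriStar hy0 hy1 hyS, log_inv, log_mul (mul_ne_zero hy0 hy1) hyS,
    log_mul hy0 hy1]
  simp only [Fin.sum_univ_two, add_assoc]
  ring

theorem ricciNegTri_eq (h0 : η 0 ≠ 0) (h1 : η 1 ≠ 0) (hS : 1 + η 0 + η 1 ≠ 0) :
    ricciNegTri η =
      !![-((η 0 ^ 2)⁻¹ + ((1 + η 0 + η 1) ^ 2)⁻¹), -((1 + η 0 + η 1) ^ 2)⁻¹;
         -((1 + η 0 + η 1) ^ 2)⁻¹, -((η 1 ^ 2)⁻¹ + ((1 + η 0 + η 1) ^ 2)⁻¹)] := by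
  have hη : ∀ i, η i ≠ 0 := Fin.forall_fin_two.2 ⟨h0, h1⟩
  have hS' : 1 + ∑ i, η i ≠ 0 := by rwa [Fin.sum_univ_two, ← add_assoc]
  have hinv {t : ℝ} (ht : t ≠ 0) : HasDerivAt (fun t => -t⁻¹) (t ^ 2)⁻¹ t :=
    (hasDerivAt_inv ht).neg.congr_deriv (neg_neg _)
  rw [ricciNegTri, (log_det_hessian_ΦNegTriStar_eventuallyEq h0 h1 hS).hessian_eq]
  refine (congrArg Neg.neg (hessian_sum_comp_add_comp (ψ'' := fun t => (t ^ 2)⁻¹)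
    (χ'' := fun t => (t ^ 2)⁻¹)
    (fun i => (eventually_ne_nhds (hη i)).mono fun t ht => (hasDerivAt_log ht).neg)
    (fun i => hinv (hη i))
    ((eventually_ne_nhds hS').mono fun t ht => (hasDerivAt_log ht).neg) (hinv hS'))).trans ?_
  ext i j
  fin_cases i <;> fin_cases j <;> simp [Fin.sum_univ_two, add_assoc]

theorem inv_hessian_ΦNegTriStar (h0 : η 0 ≠ 0) (h1 : η 1 ≠ 0) (hS : 1 + η 0 + η 1 ≠ 0) :
    (hessian ΦNegTriStar η)⁻¹ =
      !![η 0 * (1 + η 0), η 0 * η 1; η 0 * η 1, η 1 * (1 + η 1)] := by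
  rw [hessian_ΦNegTriStar h0 h1 hS]
  refine inv_eq_right_inv ?_
  ext i j
  fin_cases i <;> fin_cases j <;> simp [mul_apply, Fin.sum_univ_two] <;> field_simp <;> ring

end NegTri

/-- Determinant and trace of the Ricci endomorphism `A = R·g⁻¹` of `𝕎_NegTri`. -/
theorem ricci_endomorphism_negTri (η : Fin 2 → ℝ) (h1 : 0 < η 0) (h2 : 0 < η 1) :
    (ricciNegTri η * (hessian ΦNegTriStar η)⁻¹).det =
      (1 + 2 * (η 0 + (η 0) ^ 2 + η 1 + (η 1) ^ 2 + η 0 * η 1)) /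
        (η 0 * η 1 * (1 + η 0 + η 1)) ∧
    Matrix.trace (ricciNegTri η * (hessian ΦNegTriStar η)⁻¹) =
      -3 - 1 / η 0 - 1 / η 1 + 1 / (1 + η 0 + η 1) := by
  have hS : 0 < 1 + η 0 + η 1 := by positivity
  rw [ricciNegTri_eq h1.ne' h2.ne' hS.ne', inv_hessian_ΦNegTriStar h1.ne' h2.ne' hS.ne',
    mul_fin_two]
  constructor
  · rw [det_fin_two_of]
    field_simp
    ring
  · rw [trace_fin_two_of]
    field_simp
    ring
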